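/- Let Φ : ℝ^d → [0,∞) be an N_∞ function. Then u ↦ |ū| + ‖u'‖_{L^Φ}, where ū = (1/T)∫_0^T u(t) dt, defines a norm on W^1L^Φ([0,T],ℝ^d) equivalent to ‖u‖_{W^1L^Φ} = ‖u‖_{L^Φ} + ‖u'‖_{L^Φ}; that is, there exist constants c, C > 0 such that c·‖u‖_{W^1L^Φ} ≤ |ū| + ‖u'‖_{L^Φ} ≤ C·‖u‖_{W^1L^Φ} for every u ∈ W^1L^Φ. -/

import Mathlib

/-!
Continuity of `Φ` at `0` gives `r > 0` with `Φ ≤ 1/T` on the ball of radius `r`, so a function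
bounded by `M` on `[0,T]` has Luxemburg norm at most `M / r`. Superlinearity gives `R` with
`‖y‖ ≤ Φ y + R`, whence `∫_0^T ‖v‖ ≤ (1 + R T) ‖v‖_{L^Φ}`. Since `u` is a primitive of `u'`, its
oscillation on `[0,T]` is at most `∫_0^T ‖u'‖`, and `ū` is an average of values of `u`, so
`sup ‖u‖ ≤ |ū| + (1 + R T) ‖u'‖_{L^Φ}`; this bounds `‖u‖_{L^Φ}`. Conversely
`|ū| ≤ T⁻¹ ∫_0^T ‖u‖ ≤ T⁻¹ (1 + R T) ‖u‖_{L^Φ}`.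
-/

open MeasureTheory Filter Set
open scoped ENNReal RealInnerProductSpace Topology

noncomputable section

/-- `ℝ^d` with the euclidean norm. -/
abbrev Ed (d : ℕ) : Type := EuclideanSpace ℝ (Fin d)

/-- `Φ` is an `N_∞` function: differentiable, convex, nonnegative, vanishing exactly at `0`,
even, and superlinear at infinity. -/
def IsNInf {m : ℕ} (Φ : Ed m → ℝ) : Prop :=
  Differentiable ℝ Φ ∧ ConvexOn ℝ Set.univ Φ ∧ (∀ y, 0 ≤ Φ y) ∧ Φ 0 = 0 ∧
    (∀ y, y ≠ 0 → 0 < Φ y) ∧ (∀ y, Φ (-y) = Φ y) ∧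
    Tendsto (fun y => Φ y / ‖y‖) (comap (fun y : Ed m => ‖y‖) atTop) atTop

variable {d : ℕ}

/-- The modular `ρ_Φ(u) = ∫_0^T Φ(u(t)) dt`, as an extended nonnegative real. -/
def rhoE (T : ℝ) (Φ : Ed d → ℝ) (u : ℝ → Ed d) : ℝ≥0∞ :=
  ∫⁻ t in Icc (0:ℝ) T, ENNReal.ofReal (Φ (u t))

/-- `u ∈ L^Φ([0,T], ℝ^d)`. -/
def MemLphi (T : ℝ) (Φ : Ed d → ℝ) (u : ℝ → Ed d) : Prop :=
  AEMeasurable u (volume.restrict (Icc (0:ℝ) T)) ∧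
    ∃ l : ℝ, 0 < l ∧ rhoE T Φ (fun t => l • u t) < ⊤

/-- The Luxemburg norm of `u` on `[0,T]`. -/
def luxNorm (T : ℝ) (Φ : Ed d → ℝ) (u : ℝ → Ed d) : ℝ :=
  sInf {l : ℝ | 0 < l ∧ rhoE T Φ (fun t => l⁻¹ • u t) ≤ 1}

/-- `u ∈ W^1L^Φ([0,T], ℝ^d)` with a.e. derivative `u'` : `u` is absolutely continuous,
being the integral of the (integrable) function `u'`, and `u' ∈ L^Φ`. -/
def MemW1Lphi (T : ℝ) (Φ : Ed d → ℝ) (u u' : ℝ → Ed d) : Prop :=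
  IntegrableOn u' (Icc (0:ℝ) T) ∧ MemLphi T Φ u' ∧
    ∀ t ∈ Icc (0:ℝ) T, u t = u 0 + ∫ s in (0:ℝ)..t, u' s

open Metric

lemma ConvexOn.map_smul_le_of_map_zero {E : Type*} [AddCommGroup E] [Module ℝ E] {f : E → ℝ}
    (hf : ConvexOn ℝ univ f) (h0 : f 0 = 0) {a : ℝ} (ha0 : 0 ≤ a) (ha1 : a ≤ 1) (x : E) :
    f (a • x) ≤ a * f x := by
  simpa [h0] using hf.2 (mem_univ x) (mem_univ 0) ha0 (sub_nonneg.2 ha1) (add_sub_cancel a 1)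

section NormedGroup

variable {E : Type*} [NormedAddCommGroup E]

lemma exists_pos_forall_norm_le_imp_le {Φ : E → ℝ} (hc : ContinuousAt Φ 0) (h0 : Φ 0 = 0)
    {ε : ℝ} (hε : 0 < ε) : ∃ r > 0, ∀ y : E, ‖y‖ ≤ r → Φ y ≤ ε := by
  have hev : ∀ᶠ y in 𝓝 (0 : E), Φ y < ε := hc.eventually_lt continuousAt_const (h0 ▸ hε)
  obtain ⟨r, hr, h⟩ := nhds_basis_closedBall.eventually_iff.1 hev
  exact ⟨r, hr, fun y hy => (h (mem_closedBall_zero_iff.2 hy)).le⟩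

lemma exists_nonneg_forall_norm_le_add {Φ : E → ℝ} (hnn : ∀ y, 0 ≤ Φ y)
    (hsup : Tendsto (fun y => Φ y / ‖y‖) (comap (fun y : E => ‖y‖) atTop) atTop) :
    ∃ R ≥ 0, ∀ y : E, ‖y‖ ≤ Φ y + R := by
  have hev : ∀ᶠ y in comap (fun y : E => ‖y‖) atTop, 0 < ‖y‖ ∧ 1 ≤ Φ y / ‖y‖ :=
    (tendsto_comap.eventually (eventually_gt_atTop 0)).and (hsup.eventually_ge_atTop 1)
  obtain ⟨B, hB⟩ := eventually_atTop.1 (eventually_comap.1 hev)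
  refine ⟨max B 0, le_max_right _ _, fun y => ?_⟩
  rcases le_or_gt B ‖y‖ with hy | hy
  · obtain ⟨hpos, h1⟩ := hB _ hy y rfl
    linarith [(one_le_div hpos).1 h1, le_max_right B 0]
  · linarith [hnn y, le_max_left B 0]

variable [NormedSpace ℝ E] {T : ℝ} {u u' : ℝ → E}

lemma continuousOn_Icc_of_eq_primitive (hT : 0 ≤ T) (hu' : IntegrableOn u' (Icc 0 T))
    (hrep : ∀ t ∈ Icc (0:ℝ) T, u t = u 0 + ∫ s in (0:ℝ)..t, u' s) :
    ContinuousOn u (Icc 0 T) := by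
  have hprim := intervalIntegral.continuousOn_primitive_interval (μ := volume) (a := 0) (b := T)
    (by rwa [uIcc_of_le hT])
  rw [uIcc_of_le hT] at hprim
  exact (continuousOn_const (c := u 0)).add hprim |>.congr hrep

lemma norm_sub_le_integral_norm_of_eq_primitive (hu' : IntegrableOn u' (Icc 0 T))
    (hrep : ∀ t ∈ Icc (0:ℝ) T, u t = u 0 + ∫ s in (0:ℝ)..t, u' s) {s t : ℝ}
    (hs : s ∈ Icc 0 T) (ht : t ∈ Icc 0 T) :
    ‖u t - u s‖ ≤ ∫ x in Icc 0 T, ‖u' x‖ := by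
  have hint : ∀ x ∈ Icc (0:ℝ) T, IntervalIntegrable u' volume 0 x := fun x hx =>
    (intervalIntegrable_iff_integrableOn_Icc_of_le hx.1).2
      (hu'.mono_set (Icc_subset_Icc le_rfl hx.2))
  rw [hrep t ht, hrep s hs, add_sub_add_left_eq_sub,
    intervalIntegral.integral_interval_sub_left (hint t ht) (hint s hs)]
  refine intervalIntegral.norm_integral_le_integral_norm_uIoc.trans ?_
  exact setIntegral_mono_set hu'.norm (ae_of_all _ fun x => norm_nonneg _)
    (uIoc_subset_uIcc.trans (uIcc_subset_Icc hs ht)).eventuallyLE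

lemma norm_le_norm_mean_add_integral_norm [CompleteSpace E] (hT : 0 < T)
    (hu' : IntegrableOn u' (Icc 0 T))
    (hrep : ∀ t ∈ Icc (0:ℝ) T, u t = u 0 + ∫ s in (0:ℝ)..t, u' s) {t : ℝ} (ht : t ∈ Icc 0 T) :
    ‖u t‖ ≤ ‖T⁻¹ • ∫ s in Icc 0 T, u s‖ + ∫ s in Icc 0 T, ‖u' s‖ := by
  have hmean : T⁻¹ • ∫ s in Icc 0 T, u s = ⨍ s in Icc 0 T, u s := by
    rw [setAverage_eq, Real.volume_real_Icc_of_le hT.le, sub_zero]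
  have hmem : ⨍ s in Icc 0 T, u s ∈ closedBall (u t) (∫ s in Icc 0 T, ‖u' s‖) :=
    (convex_closedBall _ _).set_average_mem isClosed_closedBall (by simp [hT])
      (by simp) (ae_restrict_of_forall_mem measurableSet_Icc fun s hs => by
        rw [mem_closedBall, dist_comm, dist_eq_norm]
        exact norm_sub_le_integral_norm_of_eq_primitive hu' hrep hs ht)
      (continuousOn_Icc_of_eq_primitive hT.le hu' hrep).integrableOn_Icc
  rw [hmean]
  calc ‖u t‖ ≤ ‖⨍ s in Icc 0 T, u s‖ + ‖u t - ⨍ s in Icc 0 T, u s‖ :=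
        norm_le_norm_add_norm_sub' _ _
    _ ≤ _ := by
        gcongr
        rwa [mem_closedBall, dist_eq_norm, norm_sub_rev] at hmem

end NormedGroup

variable {T : ℝ} {Φ : Ed d → ℝ}

def luxSet (T : ℝ) (Φ : Ed d → ℝ) (u : ℝ → Ed d) : Set ℝ :=
  {l | 0 < l ∧ rhoE T Φ (fun t => l⁻¹ • u t) ≤ 1}

lemma luxNorm_eq_sInf_luxSet (u : ℝ → Ed d) : luxNorm T Φ u = sInf (luxSet T Φ u) := rfl

lemma luxNorm_nonneg (u : ℝ → Ed d) : 0 ≤ luxNorm T Φ u :=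
  Real.sInf_nonneg fun _ hl => hl.1.le

lemma rhoE_le_one_of_forall_le (hT : 0 < T) {v : ℝ → Ed d}
    (hv : ∀ t ∈ Icc (0:ℝ) T, Φ (v t) ≤ T⁻¹) : rhoE T Φ v ≤ 1 := by
  calc rhoE T Φ v ≤ ∫⁻ _ in Icc (0:ℝ) T, ENNReal.ofReal T⁻¹ :=
        setLIntegral_mono' measurableSet_Icc fun t ht => ENNReal.ofReal_le_ofReal (hv t ht)
    _ = 1 := by
        rw [setLIntegral_const, Real.volume_Icc, sub_zero, ← ENNReal.ofReal_mul (by positivity),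
          inv_mul_cancel₀ hT.ne', ENNReal.ofReal_one]

lemma rhoE_smul_le (hconv : ConvexOn ℝ univ Φ) (h0 : Φ 0 = 0) {a : ℝ} (ha0 : 0 ≤ a)
    (ha1 : a ≤ 1) (v : ℝ → Ed d) :
    rhoE T Φ (fun t => a • v t) ≤ ENNReal.ofReal a * rhoE T Φ v := by
  rw [rhoE, rhoE, ← lintegral_const_mul' _ _ ENNReal.ofReal_ne_top]
  refine lintegral_mono fun t => ?_
  rw [← ENNReal.ofReal_mul ha0]
  exact ENNReal.ofReal_le_ofReal (hconv.map_smul_le_of_map_zero h0 ha0 ha1 _)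

lemma luxSet_nonempty_of_memLphi (hconv : ConvexOn ℝ univ Φ) (h0 : Φ 0 = 0) {u : ℝ → Ed d}
    (hu : MemLphi T Φ u) : (luxSet T Φ u).Nonempty := by
  obtain ⟨-, l₀, hl₀, hfin⟩ := hu
  set s : ℝ := max (rhoE T Φ (fun t => l₀ • u t)).toReal 1
  have hs1 : 1 ≤ s := le_max_right _ _
  have hs0 : 0 < s := one_pos.trans_le hs1
  refine ⟨s / l₀, by positivity, ?_⟩
  calc rhoE T Φ (fun t => (s / l₀)⁻¹ • u t) = rhoE T Φ (fun t => s⁻¹ • l₀ • u t) := by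
        rw [inv_div, div_eq_inv_mul]; simp only [smul_smul]
    _ ≤ ENNReal.ofReal s⁻¹ * rhoE T Φ (fun t => l₀ • u t) :=
        rhoE_smul_le hconv h0 (by positivity) (inv_le_one_of_one_le₀ hs1) _
    _ ≤ ENNReal.ofReal s⁻¹ * ENNReal.ofReal s := by
        gcongr
        exact (ENNReal.le_ofReal_iff_toReal_le hfin.ne hs0.le).2 (le_max_left _ _)
    _ = 1 := by
        rw [← ENNReal.ofReal_mul (by positivity), inv_mul_cancel₀ hs0.ne', ENNReal.ofReal_one]

section SmallBall

variable {r M : ℝ} {u : ℝ → Ed d}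

lemma mem_luxSet_of_norm_le (hT : 0 < T) (hΦr : ∀ y : Ed d, ‖y‖ ≤ r → Φ y ≤ T⁻¹)
    (hM : ∀ t ∈ Icc (0:ℝ) T, ‖u t‖ ≤ M) {l : ℝ} (hl : 0 < l) (hMl : M ≤ l * r) :
    l ∈ luxSet T Φ u := by
  refine ⟨hl, rhoE_le_one_of_forall_le hT fun t ht => hΦr _ ?_⟩
  rw [norm_smul, norm_inv, Real.norm_of_nonneg hl.le, inv_mul_le_iff₀ hl]
  exact (hM t ht).trans hMl

lemma luxSet_nonempty_of_norm_le (hT : 0 < T) (hr : 0 < r)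
    (hΦr : ∀ y : Ed d, ‖y‖ ≤ r → Φ y ≤ T⁻¹) (hM : ∀ t ∈ Icc (0:ℝ) T, ‖u t‖ ≤ M) :
    (luxSet T Φ u).Nonempty := by
  have hM0 : 0 ≤ M := (norm_nonneg _).trans (hM 0 ⟨le_rfl, hT.le⟩)
  exact ⟨M / r + 1, mem_luxSet_of_norm_le hT hΦr hM (by positivity) (by
    rw [add_mul, div_mul_cancel₀ _ hr.ne']; linarith)⟩

lemma luxNorm_le_of_norm_le (hT : 0 < T) (hr : 0 < r)
    (hΦr : ∀ y : Ed d, ‖y‖ ≤ r → Φ y ≤ T⁻¹) (hM : ∀ t ∈ Icc (0:ℝ) T, ‖u t‖ ≤ M) :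
    luxNorm T Φ u ≤ M / r := by
  have hM0 : 0 ≤ M := (norm_nonneg _).trans (hM 0 ⟨le_rfl, hT.le⟩)
  rw [luxNorm_eq_sInf_luxSet]
  refine le_of_forall_pos_le_add fun ε hε => csInf_le ⟨0, fun _ hl => hl.1.le⟩ ?_
  exact mem_luxSet_of_norm_le hT hΦr hM (by positivity) (by
    rw [add_mul, div_mul_cancel₀ _ hr.ne']; nlinarith)

end SmallBall

section Superlinear

variable {R : ℝ} {u : ℝ → Ed d}

lemma integral_norm_le_of_mem_luxSet (hT : 0 ≤ T) (hR0 : 0 ≤ R)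
    (hR : ∀ y : Ed d, ‖y‖ ≤ Φ y + R) (hu : AEStronglyMeasurable u (volume.restrict (Icc 0 T)))
    {l : ℝ} (hl : l ∈ luxSet T Φ u) :
    ∫ t in Icc 0 T, ‖u t‖ ≤ (1 + R * T) * l := by
  obtain ⟨hl0, hρ⟩ := hl
  have hpt : ∀ t, ‖u t‖ₑ ≤
      ENNReal.ofReal l * (ENNReal.ofReal (Φ (l⁻¹ • u t)) + ENNReal.ofReal R) := fun t =>
    calc ‖u t‖ₑ = ENNReal.ofReal (l * ‖l⁻¹ • u t‖) := by
          rw [← ofReal_norm, norm_smul, norm_inv, Real.norm_of_nonneg hl0.le,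
            mul_inv_cancel_left₀ hl0.ne']
      _ ≤ ENNReal.ofReal l * ENNReal.ofReal (Φ (l⁻¹ • u t) + R) := by
          rw [← ENNReal.ofReal_mul hl0.le]
          exact ENNReal.ofReal_le_ofReal (mul_le_mul_of_nonneg_left (hR _) hl0.le)
      _ ≤ _ := by gcongr; exact ENNReal.ofReal_add_le
  rw [integral_norm_eq_lintegral_enorm hu]
  refine ENNReal.toReal_le_of_le_ofReal (by positivity) ?_
  calc ∫⁻ t in Icc 0 T, ‖u t‖ₑ
      ≤ ∫⁻ t in Icc 0 T,
          ENNReal.ofReal l * (ENNReal.ofReal (Φ (l⁻¹ • u t)) + ENNReal.ofReal R) :=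
        lintegral_mono hpt
    _ = ENNReal.ofReal l *
          (rhoE T Φ (fun t => l⁻¹ • u t) + ENNReal.ofReal R * ENNReal.ofReal T) := by
        rw [lintegral_const_mul' _ _ ENNReal.ofReal_ne_top, lintegral_add_right _ measurable_const,
          setLIntegral_const, Real.volume_Icc, sub_zero, rhoE]
    _ ≤ ENNReal.ofReal l * (1 + ENNReal.ofReal R * ENNReal.ofReal T) := by gcongr
    _ = ENNReal.ofReal ((1 + R * T) * l) := by
        rw [← ENNReal.ofReal_mul hR0, ← ENNReal.ofReal_one,
          ← ENNReal.ofReal_add zero_le_one (by positivity), ← ENNReal.ofReal_mul hl0.le, mul_comm]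

lemma integral_norm_le_mul_luxNorm (hT : 0 ≤ T) (hR0 : 0 ≤ R)
    (hR : ∀ y : Ed d, ‖y‖ ≤ Φ y + R) (hu : AEStronglyMeasurable u (volume.restrict (Icc 0 T)))
    (hne : (luxSet T Φ u).Nonempty) :
    ∫ t in Icc 0 T, ‖u t‖ ≤ (1 + R * T) * luxNorm T Φ u := by
  have hK : 0 < 1 + R * T := by positivity
  rw [← div_le_iff₀' hK, luxNorm_eq_sInf_luxSet]
  exact le_csInf hne fun l hl =>
    (div_le_iff₀' hK).2 (integral_norm_le_of_mem_luxSet hT hR0 hR hu hl)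

end Superlinear

/-- `u ↦ |ū| + ‖u'‖_{L^Φ}` is a norm on `W^1L^Φ` equivalent to
`‖u‖_{W^1L^Φ} = ‖u‖_{L^Φ} + ‖u'‖_{L^Φ}`. -/
theorem statement7 {d : ℕ} (T : ℝ) (hT : 0 < T) (Φ : Ed d → ℝ) (hΦ : IsNInf Φ) :
    ∃ c > (0:ℝ), ∃ C > (0:ℝ), ∀ u u' : ℝ → Ed d, MemW1Lphi T Φ u u' →
      c * (luxNorm T Φ u + luxNorm T Φ u') ≤
          ‖T⁻¹ • ∫ s in Icc (0:ℝ) T, u s‖ + luxNorm T Φ u' ∧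
        ‖T⁻¹ • ∫ s in Icc (0:ℝ) T, u s‖ + luxNorm T Φ u' ≤
          C * (luxNorm T Φ u + luxNorm T Φ u') := by
  obtain ⟨hdiff, hconv, hnn, h0, -, -, hsup⟩ := hΦ
  obtain ⟨r, hr, hΦr⟩ :=
    exists_pos_forall_norm_le_imp_le hdiff.continuous.continuousAt h0 (inv_pos.2 hT)
  obtain ⟨R, hR0, hR⟩ := exists_nonneg_forall_norm_le_add hnn hsup
  set K := 1 + R * T
  have hK : 0 < K := by positivity
  refine ⟨r / (r + K + 1), by positivity, K / T + 1, by positivity, fun u u' hW => ?_⟩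
  obtain ⟨hu', hu'Φ, hrep⟩ := hW
  set ū := T⁻¹ • ∫ s in Icc (0:ℝ) T, u s
  have hsup_u : ∀ t ∈ Icc (0:ℝ) T, ‖u t‖ ≤ ‖ū‖ + ∫ s in Icc 0 T, ‖u' s‖ := fun t ht =>
    norm_le_norm_mean_add_integral_norm hT hu' hrep ht
  have hu'_int : ∫ s in Icc 0 T, ‖u' s‖ ≤ K * luxNorm T Φ u' :=
    integral_norm_le_mul_luxNorm hT.le hR0 hR hu'.aestronglyMeasurable
      (luxSet_nonempty_of_memLphi hconv h0 hu'Φ)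
  have hu_int : ∫ s in Icc 0 T, ‖u s‖ ≤ K * luxNorm T Φ u :=
    integral_norm_le_mul_luxNorm hT.le hR0 hR
      ((continuousOn_Icc_of_eq_primitive hT.le hu' hrep).aestronglyMeasurable measurableSet_Icc)
      (luxSet_nonempty_of_norm_le hT hr hΦr hsup_u)
  have hlux : r * luxNorm T Φ u ≤ ‖ū‖ + K * luxNorm T Φ u' := by
    have := luxNorm_le_of_norm_le hT hr hΦr hsup_u
    rw [le_div_iff₀' hr] at this
    linarith
  have hmean : ‖ū‖ ≤ K / T * luxNorm T Φ u :=
    calc ‖ū‖ ≤ T⁻¹ * ∫ s in Icc 0 T, ‖u s‖ := by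
          rw [norm_smul, Real.norm_of_nonneg (inv_nonneg.2 hT.le)]
          gcongr
          exact norm_integral_le_integral_norm _
      _ ≤ K / T * luxNorm T Φ u := by
          rw [div_mul_eq_mul_div, ← inv_mul_eq_div]
          gcongr
  have ha := luxNorm_nonneg (T := T) (Φ := Φ) u
  have hb := luxNorm_nonneg (T := T) (Φ := Φ) u'
  constructor
  · rw [div_mul_eq_mul_div, div_le_iff₀ (by positivity)]
    nlinarith [mul_nonneg (norm_nonneg ū) hr.le, mul_nonneg (norm_nonneg ū) hK.le]
  · nlinarith [mul_nonneg (div_nonneg hK.le hT.le) hb]
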